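/- arXiv:1408.1569 — 2 statements merged into one kernel-verified Lean document; each statement's English description precedes it below -/
import Mathlib

section
/- If T is a tetrahedron contained in the ball B_R(0) in R^3 whose insphere has radius at least r_1 > 0, then there exist positive constants d_1 and α_1 depending only on R and r_1 such that the distance between any two distinct vertices of T is at least d_1 and every internal angle of every triangular facet of T is at least α_1. -/
open Metric Set EuclideanGeometry

local notation "E3" => EuclideanSpace ℝ (Fin 3)
local notation "⟪" x ", " y "⟫" => @inner ℝ _ _ x y

lemma key_plane_dist {P : Fin 4 → E3}
    (hP : AffineIndependent ℝ P) {c : E3} {r1 : ℝ} (hr : 0 < r1)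
    (hball : Metric.ball c r1 ⊆ convexHull ℝ (Set.range P)) (i : Fin 4) {q : E3}
    (hq : q ∈ affineSpan ℝ (P '' {i}ᶜ)) : r1 ≤ dist (P i) q := by
  set s : AffineSubspace ℝ E3 := affineSpan ℝ (P '' {i}ᶜ) with hs
  have hPi : P i ∉ s := by
    have := hP.notMem_affineSpan_diff i Set.univ
    simpa [hs, Set.compl_eq_univ_diff] using this
  obtain ⟨j, hj⟩ := exists_ne i
  have hPj : P j ∈ s := subset_affineSpan ℝ _ (Set.mem_image_of_mem P (by simpa using hj))
  haveI : Nonempty s := ⟨⟨P j, hPj⟩⟩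
  set p : E3 := (EuclideanGeometry.orthogonalProjection s (P i) : E3) with hp
  have hpmem : p ∈ s := (EuclideanGeometry.orthogonalProjection s (P i)).2
  set w : E3 := P i - p with hwdef
  have hw_mem : w ∈ s.directionᗮ := by
    have := vsub_orthogonalProjection_mem_direction_orthogonal s (P i)
    simpa [hwdef] using this
  have hw0 : w ≠ 0 := by
    intro h
    apply hPi
    have : P i = p := by rwa [sub_eq_zero] at h
    rwa [this]
  set u : E3 := ‖w‖⁻¹ • w with hudef
  have hu1 : ‖u‖ = 1 := norm_smul_inv_norm hw0
  have hu_mem : u ∈ s.directionᗮ := Submodule.smul_mem _ _ hw_mem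
  set g : E3 → ℝ := fun x => ⟪x, u⟫ with hg
  have hlin : IsLinearMap ℝ g :=
    ⟨fun x y => inner_add_left _ _ _, fun t x => real_inner_smul_left _ _ _⟩
  have hgs : ∀ y ∈ s, g y = g p := by
    intro y hy
    have hd : y - p ∈ s.direction := by
      have := AffineSubspace.vsub_mem_direction hy hpmem
      simpa using this
    have : ⟪y - p, u⟫ = 0 := (Submodule.mem_orthogonal _ _).1 hu_mem _ hd
    have h2 : g y - g p = 0 := by
      rw [hg]; simpa [inner_sub_left] using this
    linarith
  have hgPi : g (P i) = g p + ‖w‖ := by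
    have h1 : ⟪w, u⟫ = ‖w‖ := by
      rw [hudef, real_inner_smul_right, real_inner_self_eq_norm_sq]
      rw [inv_mul_eq_div, sq, mul_div_assoc, div_self (norm_ne_zero_iff.2 hw0), mul_one]
    have h2 : g (P i) - g p = ⟪w, u⟫ := by
      rw [hg]; simp [hwdef, inner_sub_left]
    linarith
  have hA : convexHull ℝ (Set.range P) ⊆ {x | g p ≤ g x ∧ g x ≤ g p + ‖w‖} := by
    apply convexHull_min
    · rintro _ ⟨m, rfl⟩
      by_cases hm : m = i
      · subst hm; simp [hgPi, norm_nonneg]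
      · have := hgs (P m) (subset_affineSpan ℝ _ (Set.mem_image_of_mem P (by simpa using hm)))
        constructor <;> simp [this, norm_nonneg]
    · exact (convex_halfSpace_ge hlin _).inter (convex_halfSpace_le hlin _)
  have hc : c ∈ convexHull ℝ (Set.range P) := hball (mem_ball_self hr)
  have hgc := hA hc
  have hlow : g p + r1 ≤ g c := by
    by_contra h
    push_neg at h
    set t : ℝ := (g c - g p + r1) / 2 with ht
    have ht0 : 0 ≤ t := by
      have := hgc.1; rw [ht]; linarith
    have htr : t < r1 := by rw [ht]; linarith
    have hxball : c - t • u ∈ Metric.ball c r1 := by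
      rw [mem_ball, dist_eq_norm]
      have : c - t • u - c = -(t • u) := by abel
      rw [this, norm_neg, norm_smul, hu1, Real.norm_eq_abs, abs_of_nonneg ht0, mul_one]
      exact htr
    have hx := (hA (hball hxball)).1
    have hgx : g (c - t • u) = g c - t := by
      rw [hg]
      simp only [inner_sub_left, real_inner_smul_left]
      have : ⟪u, u⟫ = 1 := by
        rw [real_inner_self_eq_norm_sq, hu1]; norm_num
      rw [this]; ring
    rw [hgx] at hx
    have : g c - g p < t := by rw [ht]; linarith
    linarith
  have hwr : r1 ≤ ‖w‖ := by
    have := hgc.2; linarith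
  have hgq : g q = g p := hgs q hq
  have hCS : g (P i) - g q ≤ ‖P i - q‖ := by
    have h1 : g (P i) - g q = ⟪P i - q, u⟫ := by rw [hg]; simp [inner_sub_left]
    have h2 := real_inner_le_norm (P i - q) u
    rw [hu1, mul_one] at h2
    linarith
  rw [dist_eq_norm]
  rw [hgq, hgPi] at hCS
  linarith

lemma alg_aux (a b d : ℝ) (hd : d ≠ 0) :
    (a - 2 * (b / d) * b + (b / d) ^ 2 * d) * d = a * d - b * b := by
  field_simp
  ring

/-- If `T` is a tetrahedron contained in the ball `B_R(0)` in `ℝ³` whose insphere has radius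
at least `r₁ > 0`, then there exist positive constants `d₁` and `α₁`, depending only on `R`
and `r₁`, such that the distance between any two distinct vertices of `T` is at least `d₁`
and every internal angle of every triangular facet of `T` is at least `α₁`. -/
theorem stmt0 (R r1 : ℝ) (hR : 0 < R) (hr1 : 0 < r1) :
    ∃ d1 α1 : ℝ, 0 < d1 ∧ 0 < α1 ∧
      ∀ P : Fin 4 → EuclideanSpace ℝ (Fin 3),
        AffineIndependent ℝ P →
        convexHull ℝ (Set.range P) ⊆ Metric.ball 0 R →
        (∃ c : EuclideanSpace ℝ (Fin 3),
            Metric.ball c r1 ⊆ convexHull ℝ (Set.range P)) →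
        (∀ i j : Fin 4, i ≠ j → d1 ≤ dist (P i) (P j)) ∧
        (∀ i j k : Fin 4, j ≠ i → k ≠ i → j ≠ k →
          α1 ≤ EuclideanGeometry.angle (P j) (P i) (P k)) := by
  refine ⟨r1, r1 / (2 * R), hr1, by positivity, ?_⟩
  rintro P hP hsub ⟨c, hc⟩
  have hball : ∀ m : Fin 4, ‖P m‖ < R := fun m => by
    have := hsub (subset_convexHull ℝ _ (Set.mem_range_self m))
    simpa [mem_ball, dist_eq_norm] using this
  constructor
  · intro i j hij
    have hq : P j ∈ affineSpan ℝ (P '' {i}ᶜ) :=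
      subset_affineSpan ℝ _ (Set.mem_image_of_mem P (by simpa using hij.symm))
    exact key_plane_dist hP hr1 hc i hq
  · intro i j k hji hki hjk
    set x : EuclideanSpace ℝ (Fin 3) := P j - P i with hx
    set y : EuclideanSpace ℝ (Fin 3) := P k - P i with hy
    have hy0 : y ≠ 0 := by
      rw [hy, sub_ne_zero]
      exact fun h => hki (hP.injective h)
    have hyy : ⟪y, y⟫ ≠ (0:ℝ) := inner_self_ne_zero.2 hy0
    set t : ℝ := ⟪x, y⟫ / ⟪y, y⟫ with ht
    set q : EuclideanSpace ℝ (Fin 3) := AffineMap.lineMap (P i) (P k) t with hqdef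
    have hq : q ∈ affineSpan ℝ (P '' {j}ᶜ) := by
      have h1 : q ∈ affineSpan ℝ {P i, P k} := AffineMap.lineMap_mem_affineSpan_pair t _ _
      refine affineSpan_mono ℝ ?_ h1
      rintro z (rfl | rfl)
      · exact Set.mem_image_of_mem P (by simpa using hji.symm)
      · exact Set.mem_image_of_mem P (by simpa using hjk.symm)
    have hkey := key_plane_dist hP hr1 hc j hq
    have hdq : dist (P j) q = ‖x - t • y‖ := by
      rw [dist_eq_norm, hqdef, AffineMap.lineMap_apply]
      congr 1
      simp only [vsub_eq_sub, vadd_eq_add, hx, hy]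
      abel
    set θ : ℝ := EuclideanGeometry.angle (P j) (P i) (P k) with hθ
    have hθeq : θ = InnerProductGeometry.angle x y := rfl
    have hsinθ : Real.sin θ * (‖x‖ * ‖y‖) = Real.sqrt (⟪x,x⟫ * ⟪y,y⟫ - ⟪x,y⟫ * ⟪x,y⟫) := by
      rw [hθeq]; exact InnerProductGeometry.sin_angle_mul_norm_mul_norm x y
    have hnormsq : (‖x - t • y‖ * ‖y‖) ^ 2 = ⟪x,x⟫ * ⟪y,y⟫ - ⟪x,y⟫ * ⟪x,y⟫ := by
      have h1 : ‖x - t • y‖ ^ 2 = ⟪x - t • y, x - t • y⟫ := real_inner_self_eq_norm_sq _ |>.symm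
      have h2 : ‖y‖ ^ 2 = ⟪y, y⟫ := real_inner_self_eq_norm_sq _ |>.symm
      have h3 : ⟪x - t • y, x - t • y⟫
          = ⟪x,x⟫ - 2 * t * ⟪x,y⟫ + t ^ 2 * ⟪y,y⟫ := by
        simp only [inner_sub_left, inner_sub_right, real_inner_smul_left, real_inner_smul_right,
          real_inner_comm y x]
        ring
      rw [mul_pow, h1, h2, h3, ht]
      exact alg_aux _ _ _ hyy
    have hmul : ‖x - t • y‖ * ‖y‖ = Real.sin θ * (‖x‖ * ‖y‖) := by
      rw [hsinθ, ← hnormsq, Real.sqrt_sq (by positivity)]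
    have hy0' : ‖y‖ ≠ 0 := norm_ne_zero_iff.2 hy0
    have hnorm : ‖x - t • y‖ = Real.sin θ * ‖x‖ :=
      mul_right_cancel₀ hy0' (by rw [hmul]; ring)
    have hsin_nonneg : 0 ≤ Real.sin θ :=
      Real.sin_nonneg_of_nonneg_of_le_pi (EuclideanGeometry.angle_nonneg _ _ _)
        (EuclideanGeometry.angle_le_pi _ _ _)
    have hxR : ‖x‖ ≤ 2 * R := by
      have h1 := hball j
      have h2 := hball i
      calc ‖x‖ ≤ ‖P j‖ + ‖P i‖ := norm_sub_le _ _
        _ ≤ 2 * R := by linarith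
    have hr_le : r1 ≤ Real.sin θ * (2 * R) := by
      rw [hdq, hnorm] at hkey
      calc r1 ≤ Real.sin θ * ‖x‖ := hkey
        _ ≤ Real.sin θ * (2 * R) := by
          exact mul_le_mul_of_nonneg_left hxR hsin_nonneg
    have hsin_le : Real.sin θ ≤ θ :=
      Real.sin_le (EuclideanGeometry.angle_nonneg _ _ _)
    rw [div_le_iff₀ (by positivity)]
    calc r1 ≤ Real.sin θ * (2 * R) := hr_le
      _ ≤ θ * (2 * R) := by nlinarith
end

section
/- There exists a constant A_1 > 0, depending only on R and r_1, such that for any two tetrahedra T^(0), T^(1) ⊂ B_R(0) in R^3 each having insphere radius at least r_1, the minimum over permutations σ of {1,2,3,4} of max_{1≤i≤4} |P_i^(0) − P_{σ(i)}^(1)| is at most A_1 · d_H(T^(0), T^(1)), where {P_i^(k)} are the vertices of T^(k). -/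
open Metric Set

/-!
Fix a vertex `Pᵢ` of `T⁰` and its barycentric coordinate `λᵢ`, an affine function equal to `1` at
`Pᵢ`, to `0` at the other vertices and lying in `[0, 1]` on `T⁰`. Since `T⁰` contains a ball of
radius `r`, `λᵢ` is `1/r`-Lipschitz. Let `d = d_H(T⁰, T¹)`. Some point of `T¹` is `d`-close to `Pᵢ`,
so the maximum of `λᵢ` over `T¹`, attained at a vertex `Q`, is at least `1 - d/r`; a point `x ∈ T⁰`
that is `d`-close to `Q` then has `λᵢ x ≥ 1 - 2d/r`, which forces `x` to be within `2dD/r` of `Pᵢ`,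
where `D` bounds the vertex distances. Hence each vertex of `T⁰` has a vertex of `T¹` within
`(1 + 2D/r) d`. The vertices of `T⁰` are `r` apart, so for small `d` this assignment is injective;
for large `d` any permutation will do.
-/

theorem AffineMap.convexOn_univ {𝕜 E : Type*} [Field 𝕜] [LinearOrder 𝕜] [IsStrictOrderedRing 𝕜]
    [AddCommGroup E] [Module 𝕜 E] (f : E →ᵃ[𝕜] 𝕜) : ConvexOn 𝕜 univ f :=
  ⟨convex_univ, fun _ _ _ _ _ _ _ _ hab => (Convex.combo_affine_apply hab).le⟩

theorem Metric.exists_dist_le_hausdorffDist_of_mem {α : Type*} [PseudoMetricSpace α]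
    {s t : Set α} {x : α} (ht : IsCompact t) (hx : x ∈ s) (fin : hausdorffEDist s t ≠ ⊤) :
    ∃ y ∈ t, dist x y ≤ hausdorffDist s t := by
  obtain ⟨y, hy, hxy⟩ := ht.exists_infDist_eq_dist (nonempty_of_hausdorffEDist_ne_top ⟨x, hx⟩ fin) x
  exact ⟨y, hy, hxy ▸ infDist_le_hausdorffDist_of_mem hx fin⟩

namespace AffineBasis

variable {ι κ E : Type*} [NormedAddCommGroup E] [NormedSpace ℝ E] (b : AffineBasis ι ℝ E)

theorem coord_mem_Icc_of_mem_convexHull (i : ι) {x : E} (hx : x ∈ convexHull ℝ (range b)) :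
    b.coord i x ∈ Icc 0 1 := by
  refine convexHull_min ?_ ((convex_Icc 0 1).affine_preimage (b.coord i)) hx
  rintro _ ⟨j, rfl⟩
  rcases eq_or_ne i j with rfl | hij
  · simp [coord_apply_eq]
  · simp [coord_apply_ne _ hij]

variable {c : E} {r : ℝ}

theorem abs_coord_sub_coord_le [Finite ι] (hr : 0 < r) (hc : ball c r ⊆ convexHull ℝ (range b))
    (i : ι) (x y : E) : |b.coord i x - b.coord i y| ≤ dist x y / r := by
  have hcl : closedBall c r ⊆ convexHull ℝ (range b) := by
    rw [← closure_ball c hr.ne']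
    exact closure_minimal hc ((finite_range b).isClosed_convexHull ℝ)
  have hlin : ∀ z ∈ closedBall (0 : E) r, ‖(b.coord i).linear z‖ ≤ 1 := by
    intro z hz
    have hcz : z + c ∈ closedBall c r := by simpa using hz
    have h₁ := b.coord_mem_Icc_of_mem_convexHull i (hcl hcz)
    have h₂ := b.coord_mem_Icc_of_mem_convexHull i (hcl (mem_closedBall_self hr.le))
    have hz : (b.coord i).linear z = b.coord i (z + c) - b.coord i c := by
      rw [← vsub_eq_sub, ← AffineMap.linearMap_vsub, vsub_eq_sub, add_sub_cancel_right]
    rw [Real.norm_eq_abs, abs_le, hz]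
    constructor <;> linarith [h₁.1, h₁.2, h₂.1, h₂.2]
  have := (b.coord i).linear.bound_of_ball_bound' hr 1 hlin (x - y)
  rwa [Real.norm_eq_abs, ← vsub_eq_sub, AffineMap.linearMap_vsub, vsub_eq_sub, vsub_eq_sub,
    ← dist_eq_norm, div_mul_eq_mul_div, one_mul] at this

theorem le_dist_of_ball_subset_convexHull [Finite ι] (hr : 0 < r)
    (hc : ball c r ⊆ convexHull ℝ (range b)) {i j : ι} (hij : i ≠ j) : r ≤ dist (b i) (b j) := by
  have := b.abs_coord_sub_coord_le hr hc i (b i) (b j)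
  rwa [coord_apply_eq, coord_apply_ne _ hij, sub_zero, abs_one, le_div_iff₀ hr, one_mul] at this

theorem dist_le_of_mem_convexHull {i : ι} {D : ℝ} (hD : ∀ j, dist (b j) (b i) ≤ D) {x : E}
    (hx : x ∈ convexHull ℝ (range b)) : dist x (b i) ≤ (1 - b.coord i x) * D := by
  have hconv : ConvexOn ℝ univ fun y => dist y (b i) + (D • b.coord i) y :=
    (convexOn_dist (b i) convex_univ).add (AffineMap.convexOn_univ (D • b.coord i))
  obtain ⟨_, ⟨j, rfl⟩, hj⟩ := hconv.exists_ge_of_mem_convexHull (subset_univ _) hx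
  rcases eq_or_ne i j with rfl | hij
  · simp only [AffineMap.coe_smul, Pi.smul_apply, coord_apply_eq, dist_self, smul_eq_mul] at hj
    linarith
  · simp only [AffineMap.coe_smul, Pi.smul_apply, coord_apply_ne _ hij, smul_eq_mul] at hj
    linarith [hD j]

theorem exists_dist_vertex_le_mul_hausdorffDist [Finite ι] [Finite κ] (hr : 0 < r)
    (hc : ball c r ⊆ convexHull ℝ (range b)) (P : κ → E) {D : ℝ} (hD : ∀ i j, dist (b i) (b j) ≤ D)
    (fin : hausdorffEDist (convexHull ℝ (range b)) (convexHull ℝ (range P)) ≠ ⊤) (i : ι) :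
    ∃ j, dist (b i) (P j) ≤
      (1 + 2 * D / r) * hausdorffDist (convexHull ℝ (range b)) (convexHull ℝ (range P)) := by
  set d := hausdorffDist (convexHull ℝ (range b)) (convexHull ℝ (range P))
  have hLip := b.abs_coord_sub_coord_le hr hc i
  obtain ⟨y, hy, hiy⟩ := exists_dist_le_hausdorffDist_of_mem
    ((finite_range P).isCompact_convexHull ℝ) (subset_convexHull ℝ _ (mem_range_self i)) fin
  obtain ⟨_, ⟨j, rfl⟩, hyj⟩ :=
    (AffineMap.convexOn_univ (b.coord i)).exists_ge_of_mem_convexHull (subset_univ _) hy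
  obtain ⟨x, hx, hjx⟩ := exists_dist_le_hausdorffDist_of_mem
    ((finite_range b).isCompact_convexHull ℝ) (subset_convexHull ℝ _ (mem_range_self j))
    (by rwa [hausdorffEDist_comm] at fin)
  rw [hausdorffDist_comm] at hjx
  have hcoord : 1 - b.coord i x ≤ 2 * d / r := by
    have h₁ := (abs_le.mp (hLip (b i) y)).2
    have h₂ := (abs_le.mp (hLip (P j) x)).2
    rw [coord_apply_eq] at h₁
    have : dist (b i) y / r + dist (P j) x / r ≤ 2 * d / r := by
      rw [← add_div]; gcongr; linarith
    linarith
  have hx_near : dist x (b i) ≤ 2 * D / r * d := calc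
    dist x (b i) ≤ (1 - b.coord i x) * D := b.dist_le_of_mem_convexHull (fun k => hD k i) hx
    _ ≤ 2 * d / r * D := by gcongr; exact dist_self (b i) ▸ hD i i
    _ = 2 * D / r * d := by ring
  refine ⟨j, ?_⟩
  calc dist (b i) (P j) ≤ dist x (b i) + dist x (P j) := dist_triangle_left _ _ _
    _ ≤ 2 * D / r * d + d := add_le_add hx_near (dist_comm x (P j) ▸ hjx)
    _ = (1 + 2 * D / r) * d := by ring

theorem exists_perm_dist_le_mul_hausdorffDist [Finite ι] (hr : 0 < r)
    (hc : ball c r ⊆ convexHull ℝ (range b)) (P : ι → E) {D : ℝ}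
    (hbb : ∀ i j, dist (b i) (b j) ≤ D) (hbP : ∀ i j, dist (b i) (P j) ≤ D) :
    ∃ σ : Equiv.Perm ι, ∀ i, dist (b i) (P (σ i)) ≤
      (1 + 2 * D / r) ^ 2 * hausdorffDist (convexHull ℝ (range b)) (convexHull ℝ (range P)) := by
  obtain ⟨i₀⟩ := b.nonempty
  have hD : 0 ≤ D := dist_self (b i₀) ▸ hbb i₀ i₀
  have fin : hausdorffEDist (convexHull ℝ (range b)) (convexHull ℝ (range P)) ≠ ⊤ :=
    hausdorffEDist_ne_top_of_nonempty_of_bounded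
      ⟨b i₀, subset_convexHull ℝ _ (mem_range_self i₀)⟩
      ⟨P i₀, subset_convexHull ℝ _ (mem_range_self i₀)⟩
      ((finite_range b).isCompact_convexHull ℝ).isBounded
      ((finite_range P).isCompact_convexHull ℝ).isBounded
  choose g hg using b.exists_dist_vertex_le_mul_hausdorffDist hr hc P hbb fin
  set d := hausdorffDist (convexHull ℝ (range b)) (convexHull ℝ (range P))
  set C := 1 + 2 * D / r
  have hC : 1 ≤ C := le_add_of_nonneg_right (by positivity)
  have hd : 0 ≤ d := hausdorffDist_nonneg
  by_cases hsmall : 2 * C * d < r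
  · have hg_inj : Function.Injective g := by
      intro i j hij
      by_contra hne
      have hsep := b.le_dist_of_ball_subset_convexHull hr hc hne
      have hgi := hg i
      rw [hij] at hgi
      linarith [dist_triangle_right (b i) (b j) (P (g j)), hg j]
    refine ⟨Equiv.ofBijective g (Finite.injective_iff_bijective.mp hg_inj), fun i => ?_⟩
    calc dist (b i) (P (g i)) ≤ C * d := hg i
      _ ≤ C * (C * d) := le_mul_of_one_le_left (by positivity) hC
      _ = C ^ 2 * d := by ring
  · refine ⟨1, fun i => (hbP i i).trans ?_⟩
    calc D ≤ C * r / 2 := by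
          have : C * r = r + 2 * D := by simp only [C]; field_simp
          linarith
      _ = C * (r / 2) := by ring
      _ ≤ C * (C * d) := by gcongr; linarith
      _ = C ^ 2 * d := by ring

end AffineBasis

/-- There exists `A₁ > 0`, depending only on `R` and `r₁`, such that for any two tetrahedra
contained in `B_R(0)` each having insphere radius at least `r₁`, the minimum over
permutations `σ` of `max_i |P_i⁰ − P_{σ(i)}¹|` is at most `A₁ · d_H(T⁰, T¹)`. -/
theorem stmt3 (R r1 : ℝ) (hR : 0 < R) (hr1 : 0 < r1) :
    ∃ A1 : ℝ, 0 < A1 ∧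
      ∀ P0 P1 : Fin 4 → EuclideanSpace ℝ (Fin 3),
        AffineIndependent ℝ P0 → AffineIndependent ℝ P1 →
        convexHull ℝ (Set.range P0) ⊆ Metric.ball 0 R →
        convexHull ℝ (Set.range P1) ⊆ Metric.ball 0 R →
        (∃ c0 : EuclideanSpace ℝ (Fin 3), Metric.ball c0 r1 ⊆ convexHull ℝ (Set.range P0)) →
        (∃ c1 : EuclideanSpace ℝ (Fin 3), Metric.ball c1 r1 ⊆ convexHull ℝ (Set.range P1)) →
        ∃ σ : Equiv.Perm (Fin 4), ∀ i : Fin 4,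
          dist (P0 i) (P1 (σ i)) ≤
            A1 * Metric.hausdorffDist (convexHull ℝ (Set.range P0))
                  (convexHull ℝ (Set.range P1)) := by
  refine ⟨(1 + 2 * (2 * R) / r1) ^ 2, by positivity, ?_⟩
  intro P0 P1 hind0 _ hB0 hB1 ⟨c0, hc0⟩ _
  have hvert : ∀ {Q : Fin 4 → EuclideanSpace ℝ (Fin 3)}, convexHull ℝ (range Q) ⊆ ball 0 R →
      ∀ i, Q i ∈ ball 0 R :=
    fun hQ i => hQ (subset_convexHull ℝ _ (mem_range_self i))
  have hdist {x y : EuclideanSpace ℝ (Fin 3)} (hx : x ∈ ball 0 R) (hy : y ∈ ball 0 R) :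
      dist x y ≤ 2 * R := by
    linarith [dist_triangle_right x y 0, mem_ball.1 hx, mem_ball.1 hy]
  let b0 : AffineBasis (Fin 4) ℝ (EuclideanSpace ℝ (Fin 3)) :=
    ⟨P0, hind0, hind0.affineSpan_eq_top_iff_card_eq_finrank_add_one.mpr (by simp)⟩
  exact b0.exists_perm_dist_le_mul_hausdorffDist hr1 hc0 P1
    (fun i j => hdist (hvert hB0 i) (hvert hB0 j)) (fun i j => hdist (hvert hB0 i) (hvert hB1 j))
end
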